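/- arXiv:2110.13821 — 2 statements merged into one kernel-verified Lean document; each statement's English description precedes it below -/
import Mathlib

section
/- Let X be a real Banach space. Then the mapping p ↦ n_L^p(X) from (E(X), μ) to ℝ is continuous, and consequently the set N_L(X) = {n_L^p(X) : p ∈ E(X)} is an interval: whenever a, b ∈ N_L(X) and c ∈ ℝ satisfies a ≤ c ≤ b, then c ∈ N_L(X). -/
noncomputable section

/-- The set `E(X)` of (semi)norms on `X` which are genuine norms equivalent to the
given norm of `X`. -/
def eqNorms (X : Type*) [NormedAddCommGroup X] [NormedSpace ℝ X] : Set (Seminorm ℝ X) :=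
  {p | (∀ x : X, p x = 0 → x = 0) ∧ ∃ k : ℝ, 1 ≤ k ∧ ∀ x : X, p x ≤ k * ‖x‖ ∧ ‖x‖ ≤ k * p x}

/-- The metric `μ(p,q) = log (min {k ≥ 1 : p ≤ k q, q ≤ k p})` on equivalent norms. -/
def normDist {X : Type*} [NormedAddCommGroup X] [NormedSpace ℝ X] (p q : Seminorm ℝ X) : ℝ :=
  Real.log (sInf {k : ℝ | 1 ≤ k ∧ ∀ x : X, p x ≤ k * q x ∧ q x ≤ k * p x})

/-- The dual norm of a continuous linear functional with respect to the norm `p`. -/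
def dualNormP {X : Type*} [NormedAddCommGroup X] [NormedSpace ℝ X] (p : Seminorm ℝ X)
    (f : X →L[ℝ] ℝ) : ℝ :=
  sSup {r : ℝ | ∃ z : X, p z ≤ 1 ∧ r = |f z|}

/-- The Lipschitz numerical radius of `T` with respect to the norm `p`. -/
def nuLP {X : Type*} [NormedAddCommGroup X] [NormedSpace ℝ X] (p : Seminorm ℝ X)
    (T : X → X) : ℝ :=
  sSup {r : ℝ | ∃ (x y : X) (f : X →L[ℝ] ℝ), x ≠ y ∧
    f (x - y) = (p (x - y)) ^ 2 ∧ dualNormP p f * p (x - y) = (p (x - y)) ^ 2 ∧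
    r = |f (T x - T y)| / (p (x - y)) ^ 2}

/-- The Lipschitz norm of `T` with respect to the norm `p`. -/
def lipNormP {X : Type*} [NormedAddCommGroup X] [NormedSpace ℝ X] (p : Seminorm ℝ X)
    (T : X → X) : ℝ :=
  sSup {r : ℝ | ∃ x y : X, x ≠ y ∧ r = p (T x - T y) / p (x - y)}

/-- The Lipschitz numerical index of `X` with respect to the norm `p`. -/
def nLP {X : Type*} [NormedAddCommGroup X] [NormedSpace ℝ X] (p : Seminorm ℝ X) : ℝ :=
  sInf {r : ℝ | ∃ T : X → X, (∃ K, LipschitzWith K T) ∧ T 0 = 0 ∧ lipNormP p T = 1 ∧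
    r = nuLP p T}

/-! Both indices are compared through the perturbations `Id ± t T`. Testing the state at
`(x, y)` against `Id ± t T` gives `1 + t ν(T) ≤ max ‖Id ± t T‖`, while testing at the state of
the shifted pair `(x + t (T x - T y), y)` gives `‖Id + t T‖ ≤ (1 + t² ‖T‖²) / (1 - |t| ν(T))`.
If `p ≤ k q` and `q ≤ k p`, Lipschitz norms for `p` and `q` differ by a factor at most `k²`, so
for `‖T‖_q = 1` one gets `ν_p(T) ≤ ν_q(T) + (k² - 1) / t + 4 t`; taking `t ≈ ε` and
`k² - 1 ≈ ε²` yields `|n_L^p - n_L^q| ≤ ε`. The interval property is then the intermediate value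
theorem along the segment `t ↦ (1 - t) p + t q`, which is continuous for `μ`. -/

theorem Seminorm.exists_dual_apply_eq_and_abs_le {E : Type*} [AddCommGroup E] [Module ℝ E]
    (p : Seminorm ℝ E) (u : E) : ∃ g : Module.Dual ℝ E, g u = p u ∧ ∀ z, |g z| ≤ p z := by
  let f : E →ₗ.[ℝ] ℝ := LinearPMap.mkSpanSingleton' u (p u) fun c hc => by
    rcases smul_eq_zero.1 hc with rfl | rfl <;> simp
  obtain ⟨g, hgf, hg⟩ := Module.Dual.exists_extension_of_le_seminorm_real f.domain f.toFun
    (p := p) <| by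
      rintro ⟨_, hz⟩
      obtain ⟨c, rfl⟩ := Submodule.mem_span_singleton.1 hz
      calc f ⟨c • u, hz⟩ = c * p u := LinearPMap.mkSpanSingleton'_apply _ _ _ c hz
        _ ≤ |c| * p u := mul_le_mul_of_nonneg_right (le_abs_self c) (apply_nonneg p u)
        _ = p (c • u) := by rw [map_smul_eq_mul, Real.norm_eq_abs]
  exact ⟨g, (hgf ⟨u, Submodule.mem_span_singleton_self u⟩).trans
    (LinearPMap.mkSpanSingleton'_apply_self _ _ _ _), hg⟩

section LipschitzNumericalIndex

variable {X : Type*} [NormedAddCommGroup X] [NormedSpace ℝ X] {p q : Seminorm ℝ X}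
  {T : X → X} {x y u : X} {s t : ℝ}

def Seminorm.Comparable (k : ℝ) (p q : Seminorm ℝ X) : Prop := ∀ x, p x ≤ k * q x ∧ q x ≤ k * p x

open Seminorm (Comparable)

theorem Seminorm.Comparable.symm {k : ℝ} (h : Comparable k p q) : Comparable k q p :=
  fun x => (h x).symm

theorem mem_eqNorms_of_bounds {k : ℝ} (hk : 1 ≤ k) (h : ∀ x, p x ≤ k * ‖x‖ ∧ ‖x‖ ≤ k * p x) :
    p ∈ eqNorms X :=
  ⟨fun x hx => norm_le_zero_iff.1 <| by simpa [hx] using (h x).2, k, hk, h⟩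

theorem exists_comparable (hp : p ∈ eqNorms X) (hq : q ∈ eqNorms X) :
    ∃ k, 1 ≤ k ∧ Comparable k p q := by
  obtain ⟨k₁, hk₁, h₁⟩ := hp.2
  obtain ⟨k₂, hk₂, h₂⟩ := hq.2
  refine ⟨k₁ * k₂, one_le_mul_of_one_le_of_one_le hk₁ hk₂, fun x => ⟨?_, ?_⟩⟩
  · calc p x ≤ k₁ * ‖x‖ := (h₁ x).1
      _ ≤ k₁ * (k₂ * q x) := mul_le_mul_of_nonneg_left (h₂ x).2 (by linarith)
      _ = k₁ * k₂ * q x := by ring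
  · calc q x ≤ k₂ * ‖x‖ := (h₂ x).1
      _ ≤ k₂ * (k₁ * p x) := mul_le_mul_of_nonneg_left (h₁ x).2 (by linarith)
      _ = k₁ * k₂ * p x := by ring

theorem exists_comparable_lt_of_normDist_lt (hp : p ∈ eqNorms X) (hq : q ∈ eqNorms X) {δ : ℝ}
    (h : normDist p q < δ) : ∃ k, 1 ≤ k ∧ k < Real.exp δ ∧ Comparable k p q := by
  have hne := exists_comparable hp hq
  have hbdd : BddBelow {k : ℝ | 1 ≤ k ∧ Comparable k p q} := ⟨1, fun _ hk => hk.1⟩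
  have hone : 1 ≤ sInf {k : ℝ | 1 ≤ k ∧ Comparable k p q} := le_csInf hne fun _ hk => hk.1
  obtain ⟨k, ⟨hk1, hk⟩, hlt⟩ := (csInf_lt_iff hbdd hne).1
    ((Real.log_lt_iff_lt_exp (by linarith)).1 h)
  exact ⟨k, hk1, hlt, hk⟩

theorem apply_pos_of_mem_eqNorms (hp : p ∈ eqNorms X) (hu : u ≠ 0) : 0 < p u :=
  (apply_nonneg p u).lt_of_ne fun h => hu (hp.1 u h.symm)

theorem LipschitzWith.exists_seminorm_bound (hp : p ∈ eqNorms X) {K : NNReal}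
    (hT : LipschitzWith K T) : ∃ C, ∀ x y, p (T x - T y) ≤ C * p (x - y) := by
  obtain ⟨k, hk, hpk⟩ := hp.2
  refine ⟨k * K * k, fun x y => ?_⟩
  calc p (T x - T y) ≤ k * ‖T x - T y‖ := (hpk _).1
    _ ≤ k * (K * ‖x - y‖) := by gcongr; simpa [dist_eq_norm] using hT.dist_le_mul x y
    _ ≤ k * (K * (k * p (x - y))) := by gcongr; exact (hpk _).2
    _ = k * K * k * p (x - y) := by ring

theorem lipschitz_id_add_smul (hT : ∃ K, LipschitzWith K T) (t : ℝ) :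
    ∃ K, LipschitzWith K (fun z => z + t • T z) :=
  let ⟨_, hK⟩ := hT
  ⟨_, LipschitzWith.id.add ((lipschitzWith_smul t).comp hK)⟩

theorem lipNormP_nonneg : 0 ≤ lipNormP p T :=
  Real.sSup_nonneg <| by rintro _ ⟨x, y, -, rfl⟩; positivity

theorem div_le_lipNormP (hp : p ∈ eqNorms X) (hT : ∃ K, LipschitzWith K T) (hxy : x ≠ y) :
    p (T x - T y) / p (x - y) ≤ lipNormP p T := by
  obtain ⟨C, hC⟩ := hT.choose_spec.exists_seminorm_bound hp
  refine le_csSup ⟨C, ?_⟩ ⟨x, y, hxy, rfl⟩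
  rintro _ ⟨x, y, hxy, rfl⟩
  exact (div_le_iff₀ (apply_pos_of_mem_eqNorms hp (sub_ne_zero.2 hxy))).2 (hC x y)

theorem apply_sub_le_lipNormP_mul (hp : p ∈ eqNorms X) (hT : ∃ K, LipschitzWith K T) (x y : X) :
    p (T x - T y) ≤ lipNormP p T * p (x - y) := by
  rcases eq_or_ne x y with rfl | hxy
  · simp
  · exact (div_le_iff₀ (apply_pos_of_mem_eqNorms hp (sub_ne_zero.2 hxy))).1
      (div_le_lipNormP hp hT hxy)

theorem lipNormP_le {C : ℝ} (hC : 0 ≤ C) (h : ∀ x y, p (T x - T y) ≤ C * p (x - y)) :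
    lipNormP p T ≤ C :=
  Real.sSup_le (by rintro _ ⟨x, y, -, rfl⟩; exact div_le_of_le_mul₀ (apply_nonneg _ _) hC (h x y))
    hC

theorem lipNormP_le_sq_mul {k : ℝ} (hk : 0 ≤ k) (hq : q ∈ eqNorms X) (hpq : Comparable k p q)
    (hT : ∃ K, LipschitzWith K T) : lipNormP p T ≤ k ^ 2 * lipNormP q T :=
  lipNormP_le (by positivity [lipNormP_nonneg (p := q) (T := T)]) fun x y =>
    calc p (T x - T y) ≤ k * q (T x - T y) := (hpq _).1
      _ ≤ k * (lipNormP q T * q (x - y)) := by gcongr; exact apply_sub_le_lipNormP_mul hq hT x y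
      _ ≤ k * (lipNormP q T * (k * p (x - y))) := by
          gcongr
          · exact lipNormP_nonneg
          · exact (hpq _).2
      _ = k ^ 2 * lipNormP q T * p (x - y) := by ring

theorem lipNormP_id [Nontrivial X] (hp : p ∈ eqNorms X) : lipNormP p (fun z : X => z) = 1 := by
  refine le_antisymm (lipNormP_le zero_le_one fun x y => by rw [one_mul]) ?_
  obtain ⟨x, hx⟩ := exists_ne (0 : X)
  calc 1 = p (x - 0) / p (x - 0) :=
        (div_self (apply_pos_of_mem_eqNorms hp (sub_ne_zero.2 hx)).ne').symm
    _ ≤ lipNormP p (fun z : X => z) := div_le_lipNormP hp ⟨1, LipschitzWith.id⟩ hx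

theorem lipNormP_const_smul (c : ℝ) : lipNormP p (fun z => c • T z) = |c| * lipNormP p T := by
  rw [lipNormP, lipNormP, ← smul_eq_mul, ← Real.sSup_smul_of_nonneg (abs_nonneg c)]
  congr 1
  ext r
  simp only [Set.mem_ofPred_eq, Set.mem_smul_set, smul_eq_mul, ← smul_sub, map_smul_eq_mul,
    Real.norm_eq_abs, mul_div_assoc]
  constructor
  · rintro ⟨x, y, hxy, rfl⟩; exact ⟨_, ⟨x, y, hxy, rfl⟩, rfl⟩
  · rintro ⟨_, ⟨x, y, hxy, rfl⟩, rfl⟩; exact ⟨x, y, hxy, rfl⟩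

theorem abs_apply_le_dualNormP_mul (hp : p ∈ eqNorms X) (f : X →L[ℝ] ℝ) (z : X) :
    |f z| ≤ dualNormP p f * p z := by
  rcases eq_or_ne z 0 with rfl | hz
  · simp
  obtain ⟨k, hk1, hk⟩ := hp.2
  have hpz := apply_pos_of_mem_eqNorms hp hz
  have hbdd : BddAbove {r : ℝ | ∃ z : X, p z ≤ 1 ∧ r = |f z|} := by
    refine ⟨‖f‖ * k, ?_⟩
    rintro _ ⟨z, hz, rfl⟩
    calc |f z| ≤ ‖f‖ * ‖z‖ := f.le_opNorm z
      _ ≤ ‖f‖ * (k * 1) := by gcongr; exact (hk z).2.trans (by gcongr)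
      _ = ‖f‖ * k := by rw [mul_one]
  have h := le_csSup hbdd ⟨(p z)⁻¹ • z, by simp [map_smul_eq_mul, abs_of_pos hpz, hpz.ne'], rfl⟩
  rw [map_smul, smul_eq_mul, abs_mul, abs_of_pos (inv_pos.2 hpz), inv_mul_le_iff₀ hpz] at h
  exact h.trans_eq (mul_comm _ _)

theorem dualNormP_le {f : X →L[ℝ] ℝ} {c : ℝ} (hc : 0 ≤ c) (h : ∀ z, |f z| ≤ c * p z) :
    dualNormP p f ≤ c :=
  Real.sSup_le (by rintro _ ⟨z, hz, rfl⟩; exact (h z).trans (mul_le_of_le_one_right hc hz)) hc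

def IsState (p : Seminorm ℝ X) (u : X) (f : X →L[ℝ] ℝ) : Prop :=
  f u = p u ^ 2 ∧ ∀ z, |f z| ≤ p u * p z

theorem isState_iff (hp : p ∈ eqNorms X) (hu : u ≠ 0) {f : X →L[ℝ] ℝ} :
    IsState p u f ↔ f u = p u ^ 2 ∧ dualNormP p f * p u = p u ^ 2 := by
  have hpu := apply_pos_of_mem_eqNorms hp hu
  refine and_congr_right fun hfu => ⟨fun h => ?_, fun h z => ?_⟩
  · have hle := dualNormP_le hpu.le h
    have hge : p u * p u ≤ dualNormP p f * p u := by
      simpa [hfu, sq, abs_of_nonneg (mul_self_nonneg (p u))] using abs_apply_le_dualNormP_mul hp f u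
    rw [le_antisymm hle (le_of_mul_le_mul_right hge hpu), sq]
  · rw [← mul_right_cancel₀ hpu.ne' (h.trans (sq (p u)))]
    exact abs_apply_le_dualNormP_mul hp f z

theorem exists_isState (hp : p ∈ eqNorms X) (u : X) : ∃ f, IsState p u f := by
  obtain ⟨g, hgu, hg⟩ := p.exists_dual_apply_eq_and_abs_le u
  obtain ⟨k, -, hk⟩ := hp.2
  let g' : X →L[ℝ] ℝ := g.mkContinuous k fun z => (hg z).trans (hk z).1
  refine ⟨p u • g', by simp [g', hgu, sq], fun z => ?_⟩
  simpa [g', abs_mul, abs_of_nonneg (apply_nonneg p u)] using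
    mul_le_mul_of_nonneg_left (hg z) (apply_nonneg p u)

theorem nuLP_nonneg : 0 ≤ nuLP p T :=
  Real.sSup_nonneg <| by rintro _ ⟨x, y, f, -, -, -, rfl⟩; positivity

theorem abs_apply_le_lipNormP_mul (hp : p ∈ eqNorms X) (hT : ∃ K, LipschitzWith K T)
    {f : X →L[ℝ] ℝ} (hf : IsState p (x - y) f) :
    |f (T x - T y)| ≤ lipNormP p T * p (x - y) ^ 2 :=
  calc |f (T x - T y)| ≤ p (x - y) * p (T x - T y) := hf.2 _
    _ ≤ p (x - y) * (lipNormP p T * p (x - y)) := by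
        gcongr; exact apply_sub_le_lipNormP_mul hp hT x y
    _ = lipNormP p T * p (x - y) ^ 2 := by ring

theorem abs_apply_le_nuLP_mul (hp : p ∈ eqNorms X) (hT : ∃ K, LipschitzWith K T) (hxy : x ≠ y)
    {f : X →L[ℝ] ℝ} (hf : IsState p (x - y) f) :
    |f (T x - T y)| ≤ nuLP p T * p (x - y) ^ 2 := by
  have hbdd : BddAbove {r : ℝ | ∃ (x y : X) (f : X →L[ℝ] ℝ), x ≠ y ∧
      f (x - y) = (p (x - y)) ^ 2 ∧ dualNormP p f * p (x - y) = (p (x - y)) ^ 2 ∧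
      r = |f (T x - T y)| / (p (x - y)) ^ 2} := by
    refine ⟨lipNormP p T, ?_⟩
    rintro _ ⟨x, y, f, -, hfu, hdual, rfl⟩
    rcases eq_or_ne x y with rfl | hxy
    · simp [lipNormP_nonneg]
    have hf : IsState p (x - y) f := (isState_iff hp (sub_ne_zero.2 hxy)).2 ⟨hfu, hdual⟩
    exact div_le_of_le_mul₀ (by positivity) lipNormP_nonneg (abs_apply_le_lipNormP_mul hp hT hf)
  obtain ⟨hfu, hdual⟩ := (isState_iff hp (sub_ne_zero.2 hxy)).1 hf
  have hu := apply_pos_of_mem_eqNorms hp (sub_ne_zero.2 hxy)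
  rw [← div_le_iff₀ (by positivity)]
  exact le_csSup hbdd ⟨x, y, f, hxy, hfu, hdual, rfl⟩

theorem nuLP_le [Nontrivial X] (hp : p ∈ eqNorms X) {c : ℝ}
    (h : ∀ x y f, x ≠ y → IsState p (x - y) f → |f (T x - T y)| ≤ c * p (x - y) ^ 2) :
    nuLP p T ≤ c := by
  obtain ⟨x, hx⟩ := exists_ne (0 : X)
  have hx' : x - 0 ≠ 0 := sub_ne_zero.2 hx
  obtain ⟨f, hf⟩ := exists_isState hp (x - 0)
  obtain ⟨hfu, hdual⟩ := (isState_iff hp hx').1 hf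
  refine csSup_le ⟨_, x, 0, f, hx, hfu, hdual, rfl⟩ ?_
  rintro _ ⟨x, y, f, hxy, hfu, hdual, rfl⟩
  have hu := sub_ne_zero.2 hxy
  rw [div_le_iff₀ (pow_pos (apply_pos_of_mem_eqNorms hp hu) 2)]
  exact h x y f hxy ((isState_iff hp hu).2 ⟨hfu, hdual⟩)

theorem nuLP_le_lipNormP [Nontrivial X] (hp : p ∈ eqNorms X) (hT : ∃ K, LipschitzWith K T) :
    nuLP p T ≤ lipNormP p T :=
  nuLP_le hp fun _ _ _ _ hf => abs_apply_le_lipNormP_mul hp hT hf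

theorem nuLP_const_smul (c : ℝ) : nuLP p (fun z => c • T z) = |c| * nuLP p T := by
  rw [nuLP, nuLP, ← smul_eq_mul, ← Real.sSup_smul_of_nonneg (abs_nonneg c)]
  congr 1
  ext r
  simp only [Set.mem_ofPred_eq, Set.mem_smul_set, smul_eq_mul, ← smul_sub, map_smul, abs_mul,
    mul_div_assoc]
  constructor
  · rintro ⟨x, y, f, hxy, hfu, hdual, rfl⟩; exact ⟨_, ⟨x, y, f, hxy, hfu, hdual, rfl⟩, rfl⟩
  · rintro ⟨_, ⟨x, y, f, hxy, hfu, hdual, rfl⟩, rfl⟩; exact ⟨x, y, f, hxy, hfu, hdual, rfl⟩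

theorem nLP_nonneg : 0 ≤ nLP p :=
  Real.sInf_nonneg <| by rintro _ ⟨T, -, -, -, rfl⟩; exact nuLP_nonneg

theorem nLP_le_nuLP (hT : ∃ K, LipschitzWith K T) (hT0 : T 0 = 0) (hT1 : lipNormP p T = 1) :
    nLP p ≤ nuLP p T :=
  csInf_le ⟨0, by rintro _ ⟨T, -, -, -, rfl⟩; exact nuLP_nonneg⟩ ⟨T, hT, hT0, hT1, rfl⟩

theorem le_nLP [Nontrivial X] (hp : p ∈ eqNorms X) {c : ℝ}
    (h : ∀ T : X → X, (∃ K, LipschitzWith K T) → T 0 = 0 → lipNormP p T = 1 → c ≤ nuLP p T) :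
    c ≤ nLP p :=
  le_csInf ⟨_, fun z => z, ⟨1, .id⟩, rfl, lipNormP_id hp, rfl⟩ <| by
    rintro _ ⟨T, hT, hT0, hT1, rfl⟩; exact h T hT hT0 hT1

theorem nLP_le_one [Nontrivial X] (hp : p ∈ eqNorms X) : nLP p ≤ 1 :=
  calc nLP p ≤ nuLP p (fun z : X => z) := nLP_le_nuLP ⟨1, .id⟩ rfl (lipNormP_id hp)
    _ ≤ lipNormP p (fun z : X => z) := nuLP_le_lipNormP hp ⟨1, .id⟩
    _ = 1 := lipNormP_id hp

theorem nLP_mul_lipNormP_le_nuLP (hT : ∃ K, LipschitzWith K T) (hT0 : T 0 = 0)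
    (hL : 0 < lipNormP p T) : nLP p * lipNormP p T ≤ nuLP p T := by
  have hL' : 0 < (lipNormP p T)⁻¹ := inv_pos.2 hL
  have h := nLP_le_nuLP (p := p) (T := fun z => (lipNormP p T)⁻¹ • T z)
    (let ⟨_, hK⟩ := hT; ⟨_, (lipschitzWith_smul _).comp hK⟩) (by simp [hT0])
    (by rw [lipNormP_const_smul, abs_of_pos hL', inv_mul_cancel₀ hL.ne'])
  rwa [nuLP_const_smul, abs_of_pos hL', ← div_eq_inv_mul, le_div_iff₀ hL] at h

theorem nLP_eq_zero_of_subsingleton [Subsingleton X] (p : Seminorm ℝ X) : nLP p = 0 := by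
  have hL (T : X → X) : lipNormP p T = 0 :=
    le_antisymm (lipNormP_le le_rfl fun x y => by simp [Subsingleton.elim x y]) lipNormP_nonneg
  simp [nLP, hL]

theorem apply_add_smul_mul_le (hp : p ∈ eqNorms X) (hT : ∃ K, LipschitzWith K T) (t : ℝ)
    (x y : X) :
    p ((x - y) + t • (T x - T y)) * (1 - |t| * nuLP p T) ≤
      (1 + lipNormP p T ^ 2 * t ^ 2) * p (x - y) := by
  set u := x - y
  set v := T x - T y
  set w := u + t • v
  set L := lipNormP p T
  set ν := nuLP p T
  rcases eq_or_ne w 0 with hw | hw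
  · rw [hw, map_zero, zero_mul]; positivity
  have hpw := apply_pos_of_mem_eqNorms hp hw
  have hsub : (x + t • v) - y = w := by simp only [w, u]; abel
  obtain ⟨f, hf⟩ := exists_isState hp w
  have hstate : |f (T (x + t • v) - T y)| ≤ ν * p w ^ 2 := by
    rw [← hsub] at hw hf ⊢
    exact abs_apply_le_nuLP_mul hp hT (sub_ne_zero.1 hw) hf
  have hmove : p (T x - T (x + t • v)) ≤ L * (|t| * p v) := by
    simpa [map_smul_eq_mul, Real.norm_eq_abs] using apply_sub_le_lipNormP_mul hp hT x (x + t • v)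
  have hv : p v ≤ L * p u := apply_sub_le_lipNormP_mul hp hT x y
  have hL : 0 ≤ L := lipNormP_nonneg
  -- split `v` at the state point `x + t • v`, where the numerical radius controls `f`
  have hfv : |f v| ≤ ν * p w ^ 2 + p w * (L * (|t| * p v)) :=
    calc |f v| = |f (T (x + t • v) - T y) + f (T x - T (x + t • v))| := by
          rw [← map_add]; simp only [v]; abel_nf
      _ ≤ |f (T (x + t • v) - T y)| + |f (T x - T (x + t • v))| := abs_add_le _ _
      _ ≤ ν * p w ^ 2 + p w * (L * (|t| * p v)) :=
          add_le_add hstate ((hf.2 _).trans (by gcongr))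
  have key : p w ^ 2 ≤ p w * p u + |t| * (ν * p w ^ 2 + p w * (L * (|t| * (L * p u)))) :=
    calc p w ^ 2 = f u + t * f v := by rw [← hf.1, map_add, map_smul, smul_eq_mul]
      _ ≤ |f u| + |t| * |f v| := by
          rw [← abs_mul]; exact add_le_add (le_abs_self _) (le_abs_self _)
      _ ≤ p w * p u + |t| * (ν * p w ^ 2 + p w * (L * (|t| * (L * p u)))) := by
          gcongr
          · exact hf.2 u
          · exact hfv.trans (by gcongr)
  refine le_of_mul_le_mul_right ?_ hpw
  rw [← sq_abs t]
  linarith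

theorem lipNormP_id_add_smul_le (hp : p ∈ eqNorms X) (hT : ∃ K, LipschitzWith K T)
    (ht : |t| * nuLP p T < 1) :
    lipNormP p (fun z => z + t • T z) ≤ (1 + lipNormP p T ^ 2 * t ^ 2) / (1 - |t| * nuLP p T) :=
  lipNormP_le (div_nonneg (by positivity) (by linarith)) fun x y => by
    rw [div_mul_eq_mul_div, le_div_iff₀ (by linarith),
      show (x + t • T x) - (y + t • T y) = (x - y) + t • (T x - T y) by rw [smul_sub]; abel]
    exact apply_add_smul_mul_le hp hT t x y

theorem sq_add_mul_apply_le (hp : p ∈ eqNorms X) (hT : ∃ K, LipschitzWith K T)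
    {f : X →L[ℝ] ℝ} (hf : IsState p (x - y) f) (s : ℝ) :
    p (x - y) ^ 2 + s * f (T x - T y) ≤ lipNormP p (fun z => z + s • T z) * p (x - y) ^ 2 :=
  calc p (x - y) ^ 2 + s * f (T x - T y) = f ((x + s • T x) - (y + s • T y)) := by
        rw [show (x + s • T x) - (y + s • T y) = (x - y) + s • (T x - T y) by
          rw [smul_sub]; abel, map_add, map_smul, hf.1, smul_eq_mul]
    _ ≤ p (x - y) * p ((x + s • T x) - (y + s • T y)) := (le_abs_self _).trans (hf.2 _)
    _ ≤ p (x - y) * (lipNormP p (fun z => z + s • T z) * p (x - y)) := by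
        gcongr; exact apply_sub_le_lipNormP_mul hp (lipschitz_id_add_smul hT s) x y
    _ = lipNormP p (fun z => z + s • T z) * p (x - y) ^ 2 := by ring

theorem one_add_mul_nuLP_le_max [Nontrivial X] (hp : p ∈ eqNorms X)
    (hT : ∃ K, LipschitzWith K T) (ht : 0 < t) :
    1 + t * nuLP p T ≤
      max (lipNormP p (fun z => z + t • T z)) (lipNormP p (fun z => z + (-t) • T z)) := by
  set M := max (lipNormP p (fun z => z + t • T z)) (lipNormP p (fun z => z + (-t) • T z))
  suffices h : nuLP p T ≤ (M - 1) / t by rw [le_div_iff₀ ht] at h; linarith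
  refine nuLP_le hp fun x y f _ hf => ?_
  have key : p (x - y) ^ 2 + t * |f (T x - T y)| ≤ M * p (x - y) ^ 2 := by
    rcases abs_cases (f (T x - T y)) with ⟨h, -⟩ | ⟨h, -⟩ <;> rw [h]
    · exact (sq_add_mul_apply_le hp hT hf t).trans (by gcongr; exact le_max_left _ _)
    · rw [mul_neg, ← neg_mul]
      exact (sq_add_mul_apply_le hp hT hf (-t)).trans (by gcongr; exact le_max_right _ _)
  rw [div_mul_eq_mul_div, le_div_iff₀ ht]
  linarith

theorem nuLP_le_nuLP_add [Nontrivial X] (hp : p ∈ eqNorms X) (hq : q ∈ eqNorms X) {k : ℝ}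
    (hk1 : 1 ≤ k) (hk2 : k ^ 2 ≤ 2) (hpq : Comparable k p q) (hT : ∃ K, LipschitzWith K T)
    (hT1 : lipNormP q T = 1) (ht0 : 0 < t) (ht1 : t < 1) :
    nuLP p T ≤ nuLP q T + (k ^ 2 - 1) / t + 4 * t := by
  have hνq0 : 0 ≤ nuLP q T := nuLP_nonneg
  have hνq1 : nuLP q T ≤ 1 := hT1 ▸ nuLP_le_lipNormP hq hT
  have hνp0 : 0 ≤ nuLP p T := nuLP_nonneg
  have hνp2 : nuLP p T ≤ 2 :=
    calc nuLP p T ≤ lipNormP p T := nuLP_le_lipNormP hp hT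
      _ ≤ k ^ 2 * lipNormP q T := lipNormP_le_sq_mul (by linarith) hq hpq hT
      _ ≤ 2 := by rwa [hT1, mul_one]
  have hden : 0 < 1 - t * nuLP q T := by nlinarith
  have hpm (s : ℝ) (hs : |s| = t) :
      lipNormP p (fun z => z + s • T z) ≤ k ^ 2 * ((1 + t ^ 2) / (1 - t * nuLP q T)) := by
    have h := lipNormP_id_add_smul_le hq hT (t := s) (by rw [hs]; nlinarith)
    rw [hT1, hs, one_pow, one_mul, ← sq_abs s, hs] at h
    exact (lipNormP_le_sq_mul (by linarith) hq hpq (lipschitz_id_add_smul hT s)).trans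
      (by gcongr)
  have h := (one_add_mul_nuLP_le_max hp hT ht0).trans
    (max_le (hpm t (abs_of_pos ht0)) (hpm (-t) (by rw [abs_neg, abs_of_pos ht0])))
  rw [← mul_div_assoc, le_div_iff₀ hden] at h
  have key : t * nuLP p T ≤ t * nuLP q T + (k ^ 2 - 1) + 4 * t ^ 2 := by
    nlinarith [mul_le_mul hνp2 hνq1 hνq0 zero_le_two, sq_nonneg t,
      mul_le_mul_of_nonneg_right hk2 (sq_nonneg t)]
  rw [show nuLP q T + (k ^ 2 - 1) / t + 4 * t =
      (t * nuLP q T + (k ^ 2 - 1) + 4 * t ^ 2) / t by field_simp, le_div_iff₀ ht0]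
  linarith

theorem nLP_le_nuLP_add [Nontrivial X] (hp : p ∈ eqNorms X) {k : ℝ}
    (hk1 : 1 ≤ k) (hpq : Comparable k p q) (hT : ∃ K, LipschitzWith K T) (hT0 : T 0 = 0)
    (hT1 : lipNormP q T = 1) : nLP p ≤ nuLP p T + (k ^ 2 - 1) := by
  have hL : 1 ≤ k ^ 2 * lipNormP p T := hT1 ▸ lipNormP_le_sq_mul (by linarith) hp hpq.symm hT
  have hLpos : 0 < lipNormP p T := by nlinarith [lipNormP_nonneg (p := p) (T := T)]
  have h := nLP_mul_lipNormP_le_nuLP hT hT0 hLpos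
  have hn0 : 0 ≤ nLP p := nLP_nonneg
  have hn1 : nLP p ≤ 1 := nLP_le_one hp
  have hk : 1 ≤ k ^ 2 := one_le_pow₀ hk1
  have hnk : nLP p ≤ k ^ 2 * nuLP p T := by nlinarith [mul_le_mul_of_nonneg_left hL hn0]
  nlinarith

theorem nLP_sub_le_nLP [Nontrivial X] (hp : p ∈ eqNorms X) (hq : q ∈ eqNorms X) {k ε : ℝ}
    (hε : 0 < ε) (hk1 : 1 ≤ k) (hk : k ≤ 1 + ε ^ 2 / 100) (hpq : Comparable k p q) :
    nLP p - ε ≤ nLP q := by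
  rcases le_or_gt 1 ε with hε1 | hε1
  · linarith [nLP_le_one hp, nLP_nonneg (p := q)]
  have hε2 : ε ^ 2 ≤ 1 := pow_le_one₀ hε.le hε1.le
  have hk2 : k ^ 2 - 1 ≤ ε ^ 2 / 32 := by
    nlinarith [mul_le_mul hk hk (by linarith) (by positivity : (0 : ℝ) ≤ 1 + ε ^ 2 / 100)]
  refine le_nLP hq fun T hT hT0 hT1 => ?_
  -- with `t = ε / 8` the error `(k² - 1) / t + 4 t + (k² - 1)` is at most `ε / 4 + ε / 2 + ε / 32`
  have h1 := nLP_le_nuLP_add hp hk1 hpq hT hT0 hT1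
  have h2 := nuLP_le_nuLP_add hp hq hk1 (by nlinarith) hpq hT hT1 (t := ε / 8) (by positivity)
    (by linarith)
  have h3 : (k ^ 2 - 1) / (ε / 8) ≤ ε / 4 := by rw [div_le_iff₀ (by positivity)]; nlinarith
  nlinarith

theorem abs_nLP_sub_le [Nontrivial X] (hp : p ∈ eqNorms X) (hq : q ∈ eqNorms X) {k ε : ℝ}
    (hε : 0 < ε) (hk1 : 1 ≤ k) (hk : k ≤ 1 + ε ^ 2 / 100) (hpq : Comparable k p q) :
    |nLP p - nLP q| ≤ ε :=
  abs_sub_le_iff.2 ⟨by linarith [nLP_sub_le_nLP hp hq hε hk1 hk hpq],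
    by linarith [nLP_sub_le_nLP hq hp hε hk1 hk hpq.symm]⟩

theorem exists_normDist_lt_imp_abs_nLP_sub_lt [Nontrivial X] {p₀ : Seminorm ℝ X}
    (hp₀ : p₀ ∈ eqNorms X) {ε : ℝ} (hε : 0 < ε) :
    ∃ δ > 0, ∀ p ∈ eqNorms X, normDist p p₀ < δ → |nLP p - nLP p₀| < ε := by
  refine ⟨Real.log (1 + (ε / 2) ^ 2 / 100), Real.log_pos (lt_add_of_pos_right 1 (by positivity)),
    fun p hp hd => ?_⟩
  obtain ⟨k, hk1, hk, hpq⟩ := exists_comparable_lt_of_normDist_lt hp hp₀ hd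
  rw [Real.exp_log (by positivity)] at hk
  exact (abs_nLP_sub_le hp hp₀ (half_pos hε) hk1 hk.le hpq).trans_lt (half_lt_self hε)

def segmentNorm (p q : Seminorm ℝ X) (t : ℝ) : Seminorm ℝ X :=
  (1 - t).toNNReal • p + t.toNNReal • q

theorem segmentNorm_apply (ht : t ∈ Set.Icc 0 1) (x : X) :
    segmentNorm p q t x = (1 - t) * p x + t * q x := by
  simp [segmentNorm, NNReal.smul_def, ht.1, ht.2]

@[simp] theorem segmentNorm_zero : segmentNorm p q 0 = p := by ext; simp [segmentNorm]

@[simp] theorem segmentNorm_one : segmentNorm p q 1 = q := by ext; simp [segmentNorm]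

theorem segmentNorm_mem (hp : p ∈ eqNorms X) (hq : q ∈ eqNorms X) (ht : t ∈ Set.Icc 0 1) :
    segmentNorm p q t ∈ eqNorms X := by
  obtain ⟨a, ha1, ha⟩ := hp.2
  obtain ⟨b, -, hb⟩ := hq.2
  have hmax (r : Seminorm ℝ X) (c : ℝ) (hc : ∀ x, r x ≤ c * ‖x‖ ∧ ‖x‖ ≤ c * r x)
      (hcM : c ≤ max a b) (x : X) : r x ≤ max a b * ‖x‖ ∧ ‖x‖ ≤ max a b * r x :=
    ⟨(hc x).1.trans (by gcongr), (hc x).2.trans (by gcongr)⟩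
  refine mem_eqNorms_of_bounds (le_max_of_le_left ha1 : 1 ≤ max a b) fun x => ?_
  obtain ⟨hp₁, hp₂⟩ := hmax p a ha (le_max_left a b) x
  obtain ⟨hq₁, hq₂⟩ := hmax q b hb (le_max_right a b) x
  obtain ⟨ht0, ht1⟩ := ht
  rw [segmentNorm_apply ⟨ht0, ht1⟩]
  constructor <;> nlinarith [mul_le_mul_of_nonneg_left hp₁ (sub_nonneg.2 ht1),
    mul_le_mul_of_nonneg_left hq₁ ht0, mul_le_mul_of_nonneg_left hp₂ (sub_nonneg.2 ht1),
    mul_le_mul_of_nonneg_left hq₂ ht0]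

theorem comparable_segmentNorm {K : ℝ} (hK : 0 ≤ K) (hpq : Comparable K p q)
    (hs : s ∈ Set.Icc 0 1) (ht : t ∈ Set.Icc 0 1) :
    Comparable (1 + K * |t - s|) (segmentNorm p q t) (segmentNorm p q s) := by
  intro x
  rw [segmentNorm_apply ht, segmentNorm_apply hs]
  have hpx := apply_nonneg p x
  have hqx := apply_nonneg q x
  have hgap : |q x - p x| ≤ K * min (p x) (q x) := by
    rcases le_total (p x) (q x) with h | h
    · rw [abs_of_nonneg (by linarith), min_eq_left h]; linarith [(hpq x).2]
    · rw [abs_of_nonpos (by linarith), min_eq_right h]; linarith [(hpq x).1]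
  have hmin (u : ℝ) (hu : u ∈ Set.Icc 0 1) : min (p x) (q x) ≤ (1 - u) * p x + u * q x := by
    nlinarith [min_le_left (p x) (q x), min_le_right (p x) (q x), hu.1, hu.2]
  have hdiff : |((1 - t) * p x + t * q x) - ((1 - s) * p x + s * q x)| ≤
      K * |t - s| * min (p x) (q x) := by
    rw [show ((1 - t) * p x + t * q x) - ((1 - s) * p x + s * q x) = (t - s) * (q x - p x) by
      ring, abs_mul]
    nlinarith [abs_nonneg (t - s)]
  obtain ⟨h₁, h₂⟩ := abs_sub_le_iff.1 hdiff
  have hKts : 0 ≤ K * |t - s| := by positivity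
  constructor <;> nlinarith [mul_le_mul_of_nonneg_left (hmin s hs) hKts,
    mul_le_mul_of_nonneg_left (hmin t ht) hKts]

theorem continuousOn_nLP_segmentNorm [Nontrivial X] (hp : p ∈ eqNorms X)
    (hq : q ∈ eqNorms X) : ContinuousOn (fun t => nLP (segmentNorm p q t)) (Set.Icc 0 1) := by
  obtain ⟨K, hK, hpq⟩ := exists_comparable hp hq
  rw [Metric.continuousOn_iff]
  intro s hs ε hε
  refine ⟨(ε / 2) ^ 2 / 100 / K, by positivity, fun t ht hts => ?_⟩
  rw [Real.dist_eq, lt_div_iff₀ (by linarith), mul_comm] at hts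
  rw [Real.dist_eq]
  exact (abs_nLP_sub_le (segmentNorm_mem hp hq ht) (segmentNorm_mem hp hq hs) (half_pos hε)
    (le_add_of_nonneg_right (by positivity)) (by linarith)
    (comparable_segmentNorm (by linarith) hpq hs ht)).trans_lt (half_lt_self hε)

theorem exists_mem_eqNorms_nLP_eq [Nontrivial X] (hp : p ∈ eqNorms X) (hq : q ∈ eqNorms X)
    {c : ℝ} (hc : c ∈ Set.Icc (nLP p) (nLP q)) : ∃ r ∈ eqNorms X, nLP r = c := by
  obtain ⟨t, ht, htc⟩ := intermediate_value_Icc zero_le_one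
    (continuousOn_nLP_segmentNorm hp hq) (by simpa using hc)
  exact ⟨_, segmentNorm_mem hp hq ht, htc⟩

end LipschitzNumericalIndex

theorem lipschitz_numerical_index_continuous_and_interval_general
    {X : Type*} [NormedAddCommGroup X] [NormedSpace ℝ X] :
    (∀ p₀ ∈ eqNorms X, ∀ ε > (0 : ℝ), ∃ δ > (0 : ℝ), ∀ p ∈ eqNorms X,
        normDist p p₀ < δ → |nLP p - nLP p₀| < ε) ∧
    (∀ a b c : ℝ, (∃ p ∈ eqNorms X, nLP p = a) → (∃ p ∈ eqNorms X, nLP p = b) →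
        a ≤ c → c ≤ b → ∃ p ∈ eqNorms X, nLP p = c) := by
  rcases subsingleton_or_nontrivial X with _ | _
  · refine ⟨fun _ _ ε hε => ⟨1, one_pos, fun p _ _ => by simpa [nLP_eq_zero_of_subsingleton]⟩, ?_⟩
    rintro a b c ⟨p, hp, rfl⟩ ⟨q, -, rfl⟩ hac hcb
    rw [nLP_eq_zero_of_subsingleton] at hac hcb
    exact ⟨p, hp, by rw [nLP_eq_zero_of_subsingleton]; linarith⟩
  · exact ⟨fun p₀ hp₀ ε hε => exists_normDist_lt_imp_abs_nLP_sub_lt hp₀ hε,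
      fun a b c ⟨p, hp, hpa⟩ ⟨q, hq, hqb⟩ hac hcb =>
        exists_mem_eqNorms_nLP_eq hp hq ⟨hpa ▸ hac, hqb ▸ hcb⟩⟩

/-- The map `p ↦ n_L^p(X)` from `(E(X), μ)` to `ℝ` is continuous; consequently
the set `N_L(X) = {n_L^p(X) : p ∈ E(X)}` is an interval. -/
theorem lipschitz_numerical_index_continuous_and_interval
    {X : Type*} [NormedAddCommGroup X] [NormedSpace ℝ X] [CompleteSpace X] :
    (∀ p₀ ∈ eqNorms X, ∀ ε > (0 : ℝ), ∃ δ > (0 : ℝ), ∀ p ∈ eqNorms X,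
        normDist p p₀ < δ → |nLP p - nLP p₀| < ε) ∧
    (∀ a b c : ℝ, (∃ p ∈ eqNorms X, nLP p = a) → (∃ p ∈ eqNorms X, nLP p = b) →
        a ≤ c → c ≤ b → ∃ p ∈ eqNorms X, nLP p = c) :=
  lipschitz_numerical_index_continuous_and_interval_general

end
end

section
/- Let X be a real Banach space and T ∈ Lip₀(X,X). Suppose T attains its Lipschitz numerical radius at (x, y, x*), i.e., x ≠ y, x* ∈ D(x − y) and |x*(Tx − Ty)|/‖x − y‖² = ν_L(T), and suppose that at every point u of the segment [x,y] = {tx + (1−t)y : 0 ≤ t ≤ 1} the map T is Gâteaux differentiable with derivative D_T(u), a bounded linear operator on X. Then for every u ∈ [x,y], the operator D_T(u) attains its numerical radius at ((x−y)/‖x−y‖, x*/‖x*‖); that is, ν(D_T(u)) = |(x*/‖x*‖)(D_T(u)((x−y)/‖x−y‖))|. -/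
noncomputable section

/-- The Lipschitz norm of a map between normed spaces. -/
def LipNorm {X Y : Type*} [NormedAddCommGroup X] [NormedAddCommGroup Y] (T : X → Y) : ℝ :=
  sSup {r : ℝ | ∃ x y : X, x ≠ y ∧ r = ‖T x - T y‖ / ‖x - y‖}

/-- `T ∈ Lip₀(X,Y)`: Lipschitz and vanishing at 0. -/
def IsLip0 {X Y : Type*} [NormedAddCommGroup X] [NormedAddCommGroup Y] (T : X → Y) : Prop :=
  (∃ K, LipschitzWith K T) ∧ T 0 = 0

/-- `D(x)`: functionals with `f x = ‖f‖ ‖x‖ = ‖x‖²`. -/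
def Dset (𝕜 : Type*) {X : Type*} [RCLike 𝕜] [NormedAddCommGroup X] [NormedSpace 𝕜 X]
    (x : X) : Set (X →L[𝕜] 𝕜) :=
  {f | f x = ((‖x‖ ^ 2 : ℝ) : 𝕜) ∧ ‖f‖ * ‖x‖ = ‖x‖ ^ 2}

/-- The Lipschitz numerical radius. -/
def nuL (𝕜 : Type*) {X : Type*} [RCLike 𝕜] [NormedAddCommGroup X] [NormedSpace 𝕜 X]
    (T : X → X) : ℝ :=
  sSup {r : ℝ | ∃ (x y : X) (f : X →L[𝕜] 𝕜), x ≠ y ∧ f ∈ Dset 𝕜 (x - y) ∧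
    r = ‖f (T x - T y)‖ / ‖x - y‖ ^ 2}

/-- The Lipschitz numerical index. -/
def nL (𝕜 X : Type*) [RCLike 𝕜] [NormedAddCommGroup X] [NormedSpace 𝕜 X] : ℝ :=
  sInf {r : ℝ | ∃ T : X → X, IsLip0 T ∧ LipNorm T = 1 ∧ r = nuL 𝕜 T}

/-- The (classical) numerical radius of a bounded linear operator. -/
def numRadius {X : Type*} [NormedAddCommGroup X] [NormedSpace ℝ X] (S : X →L[ℝ] X) : ℝ :=
  sSup {r : ℝ | ∃ (x : X) (f : X →L[ℝ] ℝ), ‖x‖ = 1 ∧ ‖f‖ = 1 ∧ f x = 1 ∧ r = |f (S x)|}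

/-!
Put `ν = ν_L(T)` and `c = ‖x - y‖`. Testing the definition of `ν` on pairs of points of the line
through `x` and `y`, with the rescaled functionals `t • x* ∈ D(t • (x - y))`, shows that
`φ(t) = x*(T(y + t • (x - y)))` is `ν c²`-Lipschitz. Since `|φ 1 - φ 0| = ν c²`, equality holds in
the triangle inequality, so `φ` is affine on `[0, 1]` and `x*(D_T(u)(x - y)) = φ 1 - φ 0` has
modulus `ν c²` for every `u` on the segment. Conversely, testing `ν` on the difference quotients
of `T` at `u` in a direction `z` gives `|w(D_T(u) z)| ≤ ν` for every unit pair `(z, w)` with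
`w z = 1`, i.e. `ν(D_T(u)) ≤ ν`.
-/

open Filter Set Topology

lemma eqOn_affine_of_abs_sub_le {φ : ℝ → ℝ} {L : ℝ}
    (hφ : ∀ s t, |φ s - φ t| ≤ L * |s - t|) (h : |φ 1 - φ 0| = L) :
    EqOn φ (fun t => φ 0 + t * (φ 1 - φ 0)) (Icc 0 1) := by
  rintro t ⟨ht0, ht1⟩
  have h₁ := hφ t 0
  have h₂ := hφ 1 t
  rw [sub_zero, abs_of_nonneg ht0] at h₁
  rw [abs_of_nonneg (sub_nonneg.mpr ht1)] at h₂
  rcases abs_cases (φ 1 - φ 0) with ⟨hL, -⟩ | ⟨hL, -⟩ <;> rw [hL] at h <;> subst h <;>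
    cases abs_le.mp h₁ <;> cases abs_le.mp h₂ <;> linarith

section LipschitzNumericalRadius

variable {X : Type*} [NormedAddCommGroup X]

section RCLike

variable {𝕜 : Type*} [RCLike 𝕜] [NormedSpace 𝕜 X]

lemma norm_eq_of_mem_Dset {v : X} {g : X →L[𝕜] 𝕜} (hg : g ∈ Dset 𝕜 v) (hv : v ≠ 0) :
    ‖g‖ = ‖v‖ :=
  mul_right_cancel₀ (norm_ne_zero_iff.mpr hv) (hg.2.trans (sq ‖v‖))

lemma mem_Dset_iff_of_norm_eq_one {z : X} {g : X →L[𝕜] 𝕜} (hz : ‖z‖ = 1) :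
    g ∈ Dset 𝕜 z ↔ ‖g‖ = 1 ∧ g z = 1 := by
  simp [Dset, hz, and_comm]

lemma norm_apply_sub_le_nuL_mul_sq {T : X → X} {K : NNReal} (hT : LipschitzWith K T)
    {p q : X} {g : X →L[𝕜] 𝕜} (hg : g ∈ Dset 𝕜 (p - q)) :
    ‖g (T p - T q)‖ ≤ nuL 𝕜 T * ‖p - q‖ ^ 2 := by
  rcases eq_or_ne p q with rfl | hpq
  · simp
  rw [← div_le_iff₀ (pow_pos (norm_pos_iff.mpr (sub_ne_zero.mpr hpq)) 2)]
  refine le_csSup ⟨K, ?_⟩ ⟨p, q, g, hpq, hg, rfl⟩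
  rintro r ⟨p, q, g, hpq, hg, rfl⟩
  have hpq' : 0 < ‖p - q‖ := norm_pos_iff.mpr (sub_ne_zero.mpr hpq)
  rw [div_le_iff₀ (by positivity)]
  calc ‖g (T p - T q)‖ ≤ ‖g‖ * ‖T p - T q‖ := g.le_opNorm _
    _ ≤ ‖p - q‖ * (K * ‖p - q‖) := by
      rw [norm_eq_of_mem_Dset hg (sub_ne_zero.mpr hpq)]
      gcongr
      exact hT.norm_sub_le p q
    _ = K * ‖p - q‖ ^ 2 := by ring

end RCLike

section Real

variable [NormedSpace ℝ X]

lemma smul_mem_Dset_smul {v : X} {g : X →L[ℝ] ℝ} (hg : g ∈ Dset ℝ v) (t : ℝ) :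
    t • g ∈ Dset ℝ (t • v) := by
  obtain ⟨hgv, hgn⟩ := hg
  refine ⟨?_, ?_⟩
  · simp only [RCLike.ofReal_real_eq_id, id] at hgv ⊢
    simp only [map_smul, smul_apply, hgv, smul_eq_mul, norm_smul, Real.norm_eq_abs, mul_pow,
      sq_abs]
    ring
  · rw [norm_smul, norm_smul, mul_mul_mul_comm, hgn]
    ring

lemma abs_apply_sub_le_nuL_mul {T : X → X} {K : NNReal} (hT : LipschitzWith K T)
    {z : X} {w : X →L[ℝ] ℝ} (hw : w ∈ Dset ℝ z) (p : X) (t : ℝ) :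
    |w (T (p + t • z) - T p)| ≤ nuL ℝ T * ‖z‖ ^ 2 * |t| := by
  rcases eq_or_ne t 0 with rfl | ht
  · simp
  have h := norm_apply_sub_le_nuL_mul_sq hT (p := p + t • z) (q := p)
    (by simpa using smul_mem_Dset_smul hw t)
  simp only [add_sub_cancel_left, smul_apply, smul_eq_mul, Real.norm_eq_abs,
    abs_mul, norm_smul, mul_pow, sq_abs] at h
  refine le_of_mul_le_mul_left (h.trans_eq ?_) (abs_pos.mpr ht)
  rw [← sq_abs t]
  ring

def HasGateauxDerivAt {Y : Type*} [NormedAddCommGroup Y] [NormedSpace ℝ Y]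
    (T : X → Y) (D : X →L[ℝ] Y) (u : X) : Prop :=
  ∀ z : X, Tendsto (fun t : ℝ => t⁻¹ • (T (u + t • z) - T u)) (𝓝[≠] 0) (𝓝 (D z))

lemma HasGateauxDerivAt.hasDerivAt_apply_line {Y : Type*} [NormedAddCommGroup Y]
    [NormedSpace ℝ Y] {T : X → Y} {D : X →L[ℝ] Y} {u z : X} {s : ℝ}
    (hD : HasGateauxDerivAt T D (u + s • z)) (f : Y →L[ℝ] ℝ) :
    HasDerivAt (fun t : ℝ => f (T (u + t • z))) (f (D z)) s := by
  rw [hasDerivAt_iff_tendsto_slope_zero]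
  refine ((f.continuous.tendsto _).comp (hD z)).congr fun t => ?_
  simp only [Function.comp_apply, map_smul, map_sub, add_smul, add_assoc]

lemma HasGateauxDerivAt.abs_apply_le_nuL_mul_sq {T : X → X} {K : NNReal}
    (hT : LipschitzWith K T) {D : X →L[ℝ] X} {u z : X} (hD : HasGateauxDerivAt T D u)
    {w : X →L[ℝ] ℝ} (hw : w ∈ Dset ℝ z) :
    |w (D z)| ≤ nuL ℝ T * ‖z‖ ^ 2 := by
  refine le_of_tendsto ((w.continuous.tendsto _).comp (hD z)).abs ?_
  filter_upwards [self_mem_nhdsWithin] with t (ht : t ≠ 0)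
  rw [Function.comp_apply, map_smul, smul_eq_mul, abs_mul, abs_inv,
    inv_mul_le_iff₀ (abs_pos.mpr ht), mul_comm |t|]
  exact abs_apply_sub_le_nuL_mul hT hw u t

lemma HasGateauxDerivAt.apply_eq_of_attains_nuL {T : X → X} {K : NNReal}
    (hT : LipschitzWith K T) {x y : X} {f : X →L[ℝ] ℝ} (hf : f ∈ Dset ℝ (x - y))
    (hatt : |f (T x - T y)| = nuL ℝ T * ‖x - y‖ ^ 2) {D : X →L[ℝ] X} {s : ℝ}
    (hs : s ∈ Icc (0 : ℝ) 1) (hD : HasGateauxDerivAt T D (y + s • (x - y))) :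
    f (D (x - y)) = f (T x - T y) := by
  set φ : ℝ → ℝ := fun t => f (T (y + t • (x - y)))
  have hφ₁₀ : φ 1 - φ 0 = f (T x - T y) := by simp [φ]
  have hlip : ∀ s t, |φ s - φ t| ≤ nuL ℝ T * ‖x - y‖ ^ 2 * |s - t| := fun s t => by
    have h := abs_apply_sub_le_nuL_mul hT hf (y + t • (x - y)) (s - t)
    rwa [add_assoc, ← add_smul, add_sub_cancel, map_sub] at h
  have haff := eqOn_affine_of_abs_sub_le hlip (hφ₁₀ ▸ hatt)
  have hφ' : HasDerivWithinAt φ (φ 1 - φ 0) (Icc 0 1) s :=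
    ((hasDerivAt_mul_const _).const_add _).hasDerivWithinAt.congr_of_mem haff hs
  rw [← hφ₁₀]
  exact (uniqueDiffOn_Icc_zero_one s hs).eq_deriv _
    ((hD.hasDerivAt_apply_line f).hasDerivWithinAt) hφ'

lemma numRadius_eq_of_forall_le {S : X →L[ℝ] X} {z₀ : X} {w₀ : X →L[ℝ] ℝ}
    (hz₀ : ‖z₀‖ = 1) (hw₀ : ‖w₀‖ = 1) (hwz₀ : w₀ z₀ = 1)
    (hle : ∀ (z : X) (w : X →L[ℝ] ℝ), ‖z‖ = 1 → ‖w‖ = 1 → w z = 1 → |w (S z)| ≤ |w₀ (S z₀)|) :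
    numRadius S = |w₀ (S z₀)| :=
  IsGreatest.csSup_eq ⟨⟨z₀, w₀, hz₀, hw₀, hwz₀, rfl⟩,
    by rintro r ⟨z, w, hz, hw, hwz, rfl⟩; exact hle z w hz hw hwz⟩

end Real

end LipschitzNumericalRadius

theorem gateaux_derivative_attains_numerical_radius_general
    {X : Type*} [NormedAddCommGroup X] [NormedSpace ℝ X]
    (T : X → X) (hT : IsLip0 T) (x y : X) (f : X →L[ℝ] ℝ)
    (hxy : x ≠ y) (hf : f ∈ Dset ℝ (x - y))
    (hatt : |f (T x - T y)| / ‖x - y‖ ^ 2 = nuL ℝ T)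
    (DT : X → X →L[ℝ] X)
    (hdiff : ∀ u ∈ segment ℝ x y, ∀ z : X,
      Filter.Tendsto (fun t : ℝ => t⁻¹ • (T (u + t • z) - T u)) (nhdsWithin 0 {0}ᶜ)
        (nhds (DT u z))) :
    ∀ u ∈ segment ℝ x y,
      numRadius (DT u) = |(‖f‖⁻¹ • f) ((DT u) (‖x - y‖⁻¹ • (x - y)))| := by
  obtain ⟨K, hK⟩ := hT.1
  have hv : x - y ≠ 0 := sub_ne_zero.mpr hxy
  have hatt' : |f (T x - T y)| = nuL ℝ T * ‖x - y‖ ^ 2 := by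
    rw [← hatt, div_mul_cancel₀ _ (pow_ne_zero 2 (norm_ne_zero_iff.mpr hv))]
  have hz₀ : ‖‖x - y‖⁻¹ • (x - y)‖ = 1 := by
    rw [norm_smul, norm_inv, norm_norm, inv_mul_cancel₀ (norm_ne_zero_iff.mpr hv)]
  obtain ⟨hw₀, hwz₀⟩ := (mem_Dset_iff_of_norm_eq_one hz₀).mp
    (smul_mem_Dset_smul hf ‖x - y‖⁻¹)
  rw [norm_eq_of_mem_Dset hf hv]
  intro u hu
  obtain ⟨s, hs, rfl⟩ : ∃ s ∈ Icc (0 : ℝ) 1, y + s • (x - y) = u := by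
    rwa [segment_symm, segment_eq_image'] at hu
  have hD : HasGateauxDerivAt T (DT (y + s • (x - y))) (y + s • (x - y)) := hdiff _ hu
  have hval : |(‖x - y‖⁻¹ • f) (DT (y + s • (x - y)) (‖x - y‖⁻¹ • (x - y)))| = nuL ℝ T := by
    simp only [map_smul, smul_apply, smul_eq_mul,
      hD.apply_eq_of_attains_nuL hK hf hatt' hs, abs_mul, hatt', abs_inv, abs_norm]
    field_simp
  refine numRadius_eq_of_forall_le hz₀ hw₀ hwz₀ fun z w hz hw hwz => ?_
  rw [hval]
  simpa [hz] using
    hD.abs_apply_le_nuL_mul_sq hK ((mem_Dset_iff_of_norm_eq_one hz).mpr ⟨hw, hwz⟩)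

/-- If `T ∈ Lip₀(X,X)` attains its Lipschitz numerical radius at `(x, y, x*)`
and `T` is Gâteaux differentiable at every point `u` of the segment `[x,y]` with derivative
`D_T(u)`, then for every `u ∈ [x,y]` the operator `D_T(u)` attains its numerical radius at
`((x-y)/‖x-y‖, x*/‖x*‖)`. -/
theorem gateaux_derivative_attains_numerical_radius
    {X : Type*} [NormedAddCommGroup X] [NormedSpace ℝ X] [CompleteSpace X]
    (T : X → X) (hT : IsLip0 T) (x y : X) (f : X →L[ℝ] ℝ)
    (hxy : x ≠ y) (hf : f ∈ Dset ℝ (x - y))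
    (hatt : |f (T x - T y)| / ‖x - y‖ ^ 2 = nuL ℝ T)
    (DT : X → X →L[ℝ] X)
    (hdiff : ∀ u ∈ segment ℝ x y, ∀ z : X,
      Filter.Tendsto (fun t : ℝ => t⁻¹ • (T (u + t • z) - T u)) (nhdsWithin 0 {0}ᶜ)
        (nhds (DT u z))) :
    ∀ u ∈ segment ℝ x y,
      numRadius (DT u) = |(‖f‖⁻¹ • f) ((DT u) (‖x - y‖⁻¹ • (x - y)))| :=
  gateaux_derivative_attains_numerical_radius_general T hT x y f hxy hf hatt DT hdiff

end
end
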